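/- arXiv:1202.0450 — 5 statements merged into one kernel-verified Lean document; each statement's English description precedes it below -/
import Mathlib

section
/- Let 0 < a < b, c > 1, and 0 < α < α_c := sqrt((c^2-1)/(b c^2 - a)). Define Ŝ(ξ) = sqrt((1 + a ξ^2)/(1 + b ξ^2)) for complex ξ (with the principal branch). Then for all real k ≠ 0, with ξ = k + iα, we have k · Im Ŝ(ξ) < 0. -/
open Complex

/-!
On the line `ξ = k + iα` the number `ξ²` has imaginary part `2kα`. A Möbius map
`z ↦ (1 + a z)/(1 + b z)` with real coefficients multiplies imaginary parts by the factor
`(a - b) / |1 + b z|²`, so for `a < b` the quotient `w = (1 + aξ²)/(1 + bξ²)` has imaginary part of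
sign `-sign k`. The principal square root preserves the sign of the imaginary part off the real
axis, hence so does `Ŝ(ξ) = w^{1/2}`.
-/

namespace Complex

theorem one_add_ofReal_mul_ne_zero {z : ℂ} (hz : z.im ≠ 0) (b : ℝ) : 1 + (b : ℂ) * z ≠ 0 := by
  intro h
  have him : b * z.im = 0 := by simpa using congrArg Complex.im h
  have hb : b = 0 := (mul_eq_zero.mp him).resolve_right hz
  simp [hb] at h

theorem im_one_add_mul_div_one_add_mul (a b : ℝ) (z : ℂ) :
    ((1 + (a : ℂ) * z) / (1 + (b : ℂ) * z)).im = (a - b) * z.im / normSq (1 + (b : ℂ) * z) := by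
  rw [div_im, div_sub_div_same]
  congr 1
  simp only [add_re, add_im, one_re, one_im, re_ofReal_mul, im_ofReal_mul]
  ring

theorem im_mul_cpow_inv_two_im_pos {x : ℂ} (hx : x.im ≠ 0) :
    0 < x.im * (x ^ (2⁻¹ : ℂ)).im := by
  have hsqrt : 0 < √((‖x‖ - x.re) / 2) := by
    have := (abs_re_lt_norm (z := x)).mpr hx
    exact Real.sqrt_pos.mpr (by linarith [le_abs_self x.re])
  rcases hx.lt_or_gt with hneg | hpos
  · rw [cpow_inv_two_im_eq_neg_sqrt hneg]
    exact mul_pos_of_neg_of_neg hneg (neg_neg_of_pos hsqrt)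
  · rw [cpow_inv_two_im_eq_sqrt hpos.le]
    exact mul_pos hpos hsqrt

end Complex

theorem im_S_sign_general (a b α : ℝ) (hab : a < b)
    (hα : 0 < α)
    (k : ℝ) (hk : k ≠ 0) :
    let ξ : ℂ := (k : ℂ) + (α : ℂ) * Complex.I
    let S : ℂ := ((1 + (a : ℂ) * ξ ^ 2) / (1 + (b : ℂ) * ξ ^ 2)) ^ ((1 : ℂ) / 2)
    k * S.im < 0 := by
  intro ξ S
  have hξ : (ξ ^ 2).im = 2 * k * α := by
    simp only [ξ, sq, mul_im, add_re, add_im, ofReal_re, ofReal_im, mul_re, I_re, I_im]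
    ring
  have hξ0 : (ξ ^ 2).im ≠ 0 := by
    rw [hξ]; exact mul_ne_zero (mul_ne_zero two_ne_zero hk) hα.ne'
  have hw := im_one_add_mul_div_one_add_mul a b (ξ ^ 2)
  set N := normSq (1 + (b : ℂ) * ξ ^ 2)
  have hN : 0 < N := normSq_pos.mpr (one_add_ofReal_mul_ne_zero hξ0 b)
  have hw0 : ((1 + (a : ℂ) * ξ ^ 2) / (1 + (b : ℂ) * ξ ^ 2)).im ≠ 0 := by
    rw [hw]; exact div_ne_zero (mul_ne_zero (sub_ne_zero.mpr hab.ne) hξ0) hN.ne'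
  have hprod := im_mul_cpow_inv_two_im_pos hw0
  rw [hw, hξ, ← one_div] at hprod
  have hc : 0 < 2 * α * (b - a) / N := by
    have := sub_pos.mpr hab
    positivity
  have hsplit : (a - b) * (2 * k * α) / N * S.im = -(2 * α * (b - a) / N) * (k * S.im) := by
    ring
  rw [hsplit] at hprod
  exact neg_of_mul_pos_right hprod (neg_nonpos.mpr hc.le)

/-- For `0 < a < b`, `c > 1`, `0 < α < α_c = √((c²-1)/(bc²-a))`, and any real `k ≠ 0`,
with `ξ = k + iα` and `Ŝ(ξ) = √((1+aξ²)/(1+bξ²))` (principal branch),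
one has `k · Im Ŝ(ξ) < 0`. -/
theorem im_S_sign (a b c α : ℝ) (ha : 0 < a) (hab : a < b) (hc : 1 < c)
    (hα : 0 < α) (hαc : α < Real.sqrt ((c ^ 2 - 1) / (b * c ^ 2 - a)))
    (k : ℝ) (hk : k ≠ 0) :
    let ξ : ℂ := (k : ℂ) + (α : ℂ) * Complex.I
    let S : ℂ := ((1 + (a : ℂ) * ξ ^ 2) / (1 + (b : ℂ) * ξ ^ 2)) ^ ((1 : ℂ) / 2)
    k * S.im < 0 :=
  im_S_sign_general a b α hab hα k hk
end

section
/- Let 0 < a < b, c > 1, and 0 < α < α_c := sqrt((c^2-1)/(b c^2 - a)). Define Ŝ(ξ) = sqrt((1 + a ξ^2)/(1 + b ξ^2)). Then for all real k ≠ 0, with ξ = k + iα, the modulus satisfies sqrt(a/b) < |Ŝ(ξ)| < sqrt((1 - a α^2)/(1 - b α^2)) < c. -/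
/-!
Write `ξ² = -α² + u` with `u = k (k + 2iα)`, so that `Re u = k² > 0`, and put `p = 1 - aα²`,
`q = 1 - bα²`; then `1 + aξ² = p + a u` and `1 + bξ² = q + b u`. For the principal root
`|Ŝ(ξ)|² = |1 + aξ²| / |1 + bξ²|`, so both bounds compare distances in the plane: the lower one
says that `abξ²` is closer to `-b` than to `-a`, i.e. `Re (abξ²) > -(a + b)/2`; the upper one says
`|pq + aq u| < |pq + bp u|`, which holds because `aq < bp` and `Re u > 0`. The last inequality
`p < c² q` is a rearrangement of `α < α_c`.
-/

open Complex

theorem Complex.norm_ofReal_add_lt_norm_ofReal_add {s t : ℝ} (hst : s < t) {z : ℂ}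
    (hz : -(s + t) / 2 < z.re) : ‖(s : ℂ) + z‖ < ‖(t : ℂ) + z‖ := by
  refine lt_of_pow_lt_pow_left₀ 2 (norm_nonneg _) ?_
  have key : normSq ((t : ℂ) + z) - normSq ((s : ℂ) + z) = (t - s) * (s + t + 2 * z.re) := by
    simp only [normSq_apply, add_re, add_im, ofReal_re, ofReal_im]
    ring
  rw [Complex.sq_norm, Complex.sq_norm]
  nlinarith

theorem Complex.norm_ofReal_add_mul_lt {r s t : ℝ} (hr : 0 < r) (hs : 0 ≤ s) (hst : s < t)
    {u : ℂ} (hu : 0 < u.re) : ‖(r : ℂ) + s * u‖ < ‖(r : ℂ) + t * u‖ := by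
  refine lt_of_pow_lt_pow_left₀ 2 (norm_nonneg _) ?_
  have key : normSq ((r : ℂ) + t * u) - normSq ((r : ℂ) + s * u)
      = 2 * r * (t - s) * u.re + (t - s) * (t + s) * normSq u := by
    simp only [normSq_apply, add_re, add_im, mul_re, mul_im, ofReal_re, ofReal_im]
    ring
  have h₁ : 0 < 2 * r * (t - s) * u.re := by have := sub_pos.2 hst; positivity
  have h₂ : 0 ≤ (t - s) * (t + s) * normSq u :=
    mul_nonneg (mul_nonneg (by linarith) (by linarith)) (normSq_nonneg u)
  rw [Complex.sq_norm, Complex.sq_norm]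
  linarith

theorem Complex.norm_ofReal_mul_of_nonneg {x : ℝ} (hx : 0 ≤ x) (z : ℂ) : ‖(x : ℂ) * z‖ = x * ‖z‖ := by
  rw [norm_mul, Complex.norm_of_nonneg hx]

theorem Complex.norm_cpow_one_half (z : ℂ) : ‖z ^ ((1 : ℂ) / 2)‖ = √‖z‖ := by
  have : (1 : ℂ) / 2 = ((1 / 2 : ℝ) : ℂ) := by norm_num
  rw [this, norm_cpow_real, Real.sqrt_eq_rpow]

theorem sub_mul_sq_lt_mul_sub_mul_sq_of_lt_sqrt {a b c α : ℝ} (ha : 0 < a) (hab : a < b)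
    (hc : 1 < c) (hα : 0 ≤ α) (hαc : α < √((c ^ 2 - 1) / (b * c ^ 2 - a))) :
    1 - a * α ^ 2 < c ^ 2 * (1 - b * α ^ 2) := by
  have hden : 0 < b * c ^ 2 - a := by nlinarith [one_lt_pow₀ hc two_ne_zero]
  rw [Real.lt_sqrt hα, lt_div_iff₀ hden] at hαc
  linarith

theorem mul_sq_lt_one_of_sub_mul_sq_lt {a b c α : ℝ} (hab : a < b) (hc : 1 < c)
    (h : 1 - a * α ^ 2 < c ^ 2 * (1 - b * α ^ 2)) : b * α ^ 2 < 1 := by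
  by_contra! hb
  have : c ^ 2 * (1 - b * α ^ 2) ≤ 1 - b * α ^ 2 := by
    nlinarith [one_lt_pow₀ hc two_ne_zero]
  nlinarith [sq_nonneg α]

theorem ofReal_add_ofReal_mul_I_sq (k α : ℝ) :
    ((k : ℂ) + α * I) ^ 2 = ((-α ^ 2 : ℝ) : ℂ) + k * (k + 2 * α * I) := by
  push_cast
  linear_combination (α ^ 2 : ℂ) * I_sq

theorem mul_norm_one_add_mul_sq_lt {a b α : ℝ} (ha : 0 ≤ a) (hab : a < b)
    (hbα : b * α ^ 2 < 1) (k : ℝ) :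
    a * ‖1 + (b : ℂ) * ((k : ℂ) + α * I) ^ 2‖ < b * ‖1 + (a : ℂ) * ((k : ℂ) + α * I) ^ 2‖ := by
  have hb : 0 < b := ha.trans_lt hab
  have hre : -(a + b) / 2 < (((a * b : ℝ) : ℂ) * ((k : ℂ) + α * I) ^ 2).re := by
    rw [re_ofReal_mul]
    simp only [sq, mul_re, add_re, add_im, ofReal_re, ofReal_im, mul_im, I_re, I_im]
    nlinarith [mul_nonneg (mul_nonneg ha hb.le) (mul_self_nonneg k),
      mul_le_mul_of_nonneg_left hbα.le ha]
  rw [← norm_ofReal_mul_of_nonneg ha, ← norm_ofReal_mul_of_nonneg hb.le]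
  convert norm_ofReal_add_lt_norm_ofReal_add hab hre using 2 <;> push_cast <;> ring

theorem sub_mul_sq_mul_norm_one_add_mul_sq_lt {a b α k : ℝ} (ha : 0 ≤ a) (hab : a < b)
    (hbα : b * α ^ 2 < 1) (hk : k ≠ 0) :
    (1 - b * α ^ 2) * ‖1 + (a : ℂ) * ((k : ℂ) + α * I) ^ 2‖
      < (1 - a * α ^ 2) * ‖1 + (b : ℂ) * ((k : ℂ) + α * I) ^ 2‖ := by
  have hq : 0 < 1 - b * α ^ 2 := sub_pos.2 hbα
  have hp : 0 < 1 - a * α ^ 2 := by nlinarith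
  have hu : 0 < ((k : ℂ) * (k + 2 * α * I)).re := by simpa using mul_self_pos.2 hk
  rw [← norm_ofReal_mul_of_nonneg hq.le, ← norm_ofReal_mul_of_nonneg hp.le, ofReal_add_ofReal_mul_I_sq]
  convert norm_ofReal_add_mul_lt (r := (1 - a * α ^ 2) * (1 - b * α ^ 2))
    (s := a * (1 - b * α ^ 2)) (t := b * (1 - a * α ^ 2)) (by positivity) (by positivity)
    (by nlinarith) hu using 2 <;> push_cast <;> ring

/-- For `0 < a < b`, `c > 1`, `0 < α < α_c`, and real `k ≠ 0`, with `ξ = k + iα`: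
`√(a/b) < |Ŝ(ξ)| < √((1-aα²)/(1-bα²)) < c`, where `Ŝ(ξ) = √((1+aξ²)/(1+bξ²))`. -/
theorem abs_S_bounds (a b c α : ℝ) (ha : 0 < a) (hab : a < b) (hc : 1 < c)
    (hα : 0 < α) (hαc : α < Real.sqrt ((c ^ 2 - 1) / (b * c ^ 2 - a)))
    (k : ℝ) (hk : k ≠ 0) :
    let ξ : ℂ := (k : ℂ) + (α : ℂ) * Complex.I
    let S : ℂ := ((1 + (a : ℂ) * ξ ^ 2) / (1 + (b : ℂ) * ξ ^ 2)) ^ ((1 : ℂ) / 2)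
    Real.sqrt (a / b) < ‖S‖ ∧
      ‖S‖ < Real.sqrt ((1 - a * α ^ 2) / (1 - b * α ^ 2)) ∧
      Real.sqrt ((1 - a * α ^ 2) / (1 - b * α ^ 2)) < c := by
  intro ξ S
  have hcrit := sub_mul_sq_lt_mul_sub_mul_sq_of_lt_sqrt ha hab hc hα.le hαc
  have hbα := mul_sq_lt_one_of_sub_mul_sq_lt hab hc hcrit
  have hq : 0 < 1 - b * α ^ 2 := sub_pos.2 hbα
  have hupper := sub_mul_sq_mul_norm_one_add_mul_sq_lt ha.le hab hbα hk
  have hlower := mul_norm_one_add_mul_sq_lt ha.le hab hbα k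
  -- `hupper` rules out `1 + bξ² = 0`, where the division inside `S` would return the junk value 0.
  have hDpos : 0 < ‖1 + (b : ℂ) * ξ ^ 2‖ := by
    by_contra! h
    nlinarith [norm_nonneg (1 + (a : ℂ) * ξ ^ 2)]
  have hS : ‖S‖ = √(‖1 + (a : ℂ) * ξ ^ 2‖ / ‖1 + (b : ℂ) * ξ ^ 2‖) := by
    rw [norm_cpow_one_half, norm_div]
  refine ⟨?_, ?_, ?_⟩
  · rw [hS]
    have hb : 0 < b := ha.trans hab
    exact Real.sqrt_lt_sqrt (by positivity) ((div_lt_div_iff₀ hb hDpos).2 (by linarith))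
  · rw [hS]
    exact Real.sqrt_lt_sqrt (by positivity) ((div_lt_div_iff₀ hDpos hq).2 (by linarith))
  · rw [Real.sqrt_lt' (by positivity), div_lt_iff₀ hq]
    exact hcrit
end

section
/- Let 0 < a < b, c > 1, and 0 < α < α_c := sqrt((c^2-1)/(b c^2 - a)). Then for all real k ≠ 0, with ξ = k + iα, we have |Ŝ(ξ)| < 1 - (1/2) * (b-a)(k^2 - α^2) / (1 + b(k^2 - α^2)), where Ŝ(ξ) = sqrt((1 + a ξ^2)/(1 + b ξ^2)). -/
/-!
Writing `w = ξ²`, the map `w ↦ (1 + a w)/(1 + b w)` sends a point off the real axis to something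
strictly shorter than its value `u = (1 + a Re w)/(1 + b Re w)` at the real part, because `a < b`.
Hence `|Ŝ(ξ)| = √|…| < √u ≤ (1 + u)/2`, and `(1 + u)/2` is the claimed bound. The condition
`α < α_c` guarantees `b α² < 1`, i.e. `1 + b Re ξ² > 0`.
-/

open Complex

lemma mul_sq_lt_one_of_lt_sqrt {a b c α : ℝ} (hb : 0 < b) (hab : a < b) (hc : 1 < c)
    (hα : 0 ≤ α) (hαc : α < Real.sqrt ((c ^ 2 - 1) / (b * c ^ 2 - a))) : b * α ^ 2 < 1 := by
  have hc2 : 1 < c ^ 2 := by nlinarith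
  have hden : 0 < b * c ^ 2 - a := by nlinarith
  have hα2 : α ^ 2 * (b * c ^ 2 - a) < c ^ 2 - 1 :=
    (lt_div_iff₀ hden).mp ((Real.lt_sqrt hα).mp hαc)
  by_contra! h
  nlinarith [mul_le_mul_of_nonneg_right hc2.le (sub_nonneg.mpr h),
    mul_nonneg (sub_pos.mpr hab).le (sq_nonneg α)]

lemma one_add_mul_pos_of_lt {a b x : ℝ} (ha : 0 ≤ a) (hab : a < b) (hbx : 0 < 1 + b * x) :
    0 < 1 + a * x := by
  rcases le_or_gt 0 x with h | h <;> nlinarith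

lemma norm_one_add_mul_div_lt {a b : ℝ} {w : ℂ} (ha : 0 ≤ a) (hab : a < b) (hw : w.im ≠ 0)
    (hbw : 0 < 1 + b * w.re) :
    ‖(1 + a * w) / (1 + b * w)‖ < (1 + a * w.re) / (1 + b * w.re) := by
  have haw : 0 < 1 + a * w.re := one_add_mul_pos_of_lt ha hab hbw
  have hnorm_sq (t : ℝ) : ‖1 + t * w‖ ^ 2 = (1 + t * w.re) ^ 2 + (t * w.im) ^ 2 := by
    rw [Complex.sq_norm, Complex.normSq_apply]
    simp only [add_re, one_re, mul_re, ofReal_re, ofReal_im, zero_mul, sub_zero, add_im, one_im,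
      mul_im, add_zero, zero_add]
    ring
  have hden : 0 < ‖1 + b * w‖ := norm_pos_iff.mpr fun h => by
    have := congrArg Complex.re h
    simp only [add_re, one_re, re_ofReal_mul, zero_re] at this
    linarith
  rw [norm_div, div_lt_div_iff₀ hden hbw]
  -- after squaring and cross-multiplying, the real parts cancel and only the imaginary parts compare
  have hcross : a * (1 + b * w.re) < b * (1 + a * w.re) := by nlinarith
  have hcross_sq : (a * (1 + b * w.re)) ^ 2 < (b * (1 + a * w.re)) ^ 2 :=
    pow_lt_pow_left₀ hcross (by positivity) two_ne_zero
  refine lt_of_pow_lt_pow_left₀ 2 (by positivity) ?_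
  rw [mul_pow, mul_pow, hnorm_sq, hnorm_sq]
  nlinarith [mul_lt_mul_of_pos_left hcross_sq (sq_pos_of_ne_zero hw)]

lemma norm_cpow_half (z : ℂ) : ‖z ^ ((1 : ℂ) / 2)‖ = Real.sqrt ‖z‖ := by
  rw [Real.sqrt_eq_rpow, ← Complex.norm_cpow_real]
  norm_num

lemma norm_sqrt_one_add_mul_div_lt {a b : ℝ} {w : ℂ} (ha : 0 ≤ a) (hab : a < b)
    (hw : w.im ≠ 0) (hbw : 0 < 1 + b * w.re) :
    ‖((1 + a * w) / (1 + b * w)) ^ ((1 : ℂ) / 2)‖ <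
      1 - (1 / 2) * ((b - a) * w.re) / (1 + b * w.re) := by
  set u := (1 + a * w.re) / (1 + b * w.re) with hu_def
  have hu : 0 ≤ u := (div_pos (one_add_mul_pos_of_lt ha hab hbw) hbw).le
  have hbound : 1 - (1 / 2) * ((b - a) * w.re) / (1 + b * w.re) = (1 + u) / 2 := by
    rw [hu_def]; field_simp; ring
  rw [norm_cpow_half, hbound]
  calc Real.sqrt ‖(1 + a * w) / (1 + b * w)‖
      < Real.sqrt u := Real.sqrt_lt_sqrt (norm_nonneg _) (norm_one_add_mul_div_lt ha hab hw hbw)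
    _ ≤ (1 + u) / 2 := by nlinarith [sq_nonneg (Real.sqrt u - 1), Real.sq_sqrt hu]

lemma re_im_sq_add_mul_I (k α : ℝ) :
    (((k : ℂ) + α * I) ^ 2).re = k ^ 2 - α ^ 2 ∧ (((k : ℂ) + α * I) ^ 2).im = 2 * k * α := by
  constructor <;>
  · simp only [sq, mul_re, mul_im, add_re, add_im, ofReal_re, ofReal_im, I_re, I_im]
    ring

/-- For `0 < a < b`, `c > 1`, `0 < α < α_c`, and real `k ≠ 0`, with `ξ = k + iα`:
`|Ŝ(ξ)| < 1 - (1/2)(b-a)(k²-α²)/(1+b(k²-α²))`, where `Ŝ(ξ) = √((1+aξ²)/(1+bξ²))`. -/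
theorem abs_S_refined_bound (a b c α : ℝ) (ha : 0 < a) (hab : a < b) (hc : 1 < c)
    (hα : 0 < α) (hαc : α < Real.sqrt ((c ^ 2 - 1) / (b * c ^ 2 - a)))
    (k : ℝ) (hk : k ≠ 0) :
    let ξ : ℂ := (k : ℂ) + (α : ℂ) * Complex.I
    let S : ℂ := ((1 + (a : ℂ) * ξ ^ 2) / (1 + (b : ℂ) * ξ ^ 2)) ^ ((1 : ℂ) / 2)
    ‖S‖ <
      1 - (1 / 2) * ((b - a) * (k ^ 2 - α ^ 2)) / (1 + b * (k ^ 2 - α ^ 2)) := by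
  intro ξ S
  obtain ⟨hre, him⟩ := re_im_sq_add_mul_I k α
  have hbα : b * α ^ 2 < 1 := mul_sq_lt_one_of_lt_sqrt (ha.trans hab) hab hc hα.le hαc
  have hbw : 0 < 1 + b * (ξ ^ 2).re := by
    rw [hre]; nlinarith [sq_nonneg k, (ha.trans hab).le]
  have hw : (ξ ^ 2).im ≠ 0 := by rw [him]; positivity
  rw [← hre]
  exact norm_sqrt_one_add_mul_div_lt ha.le hab hw hbw
end

section
/- Let 0 < a < b and 0 < α < 1/sqrt(b). Then for all real k, with ξ = k + iα, the complex number (-ξ^2)(1 + aξ^2)/(1 + bξ^2) is not a nonpositive real number; that is, it does not lie in the set (-∞, 0]. -/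
open Complex

/-- For `0 < a < b` and `0 < α < 1/√b`, the complex number
`(-ξ²)(1+aξ²)/(1+bξ²)` with `ξ = k + iα` is never a nonpositive real number. -/
theorem neg_xi_sq_ratio_not_nonpos_real (a b α : ℝ) (ha : 0 < a) (hab : a < b)
    (hα : 0 < α) (hαb : α < 1 / Real.sqrt b) (k : ℝ) :
    let ξ : ℂ := (k : ℂ) + (α : ℂ) * Complex.I
    ∀ r : ℝ, r ≤ 0 → (-ξ ^ 2) * (1 + (a : ℂ) * ξ ^ 2) / (1 + (b : ℂ) * ξ ^ 2) ≠ (r : ℂ) := by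
  intro ξ r hr heq
  have hb : 0 < b := ha.trans hab
  have hsb : 0 < Real.sqrt b := Real.sqrt_pos.mpr hb
  have h1 : α * Real.sqrt b < 1 := by
    rw [lt_div_iff₀ hsb] at hαb; linarith
  have hba : b * α ^ 2 < 1 := by
    have h2 : (α * Real.sqrt b) ^ 2 < 1 := by nlinarith [mul_pos hα hsb]
    rw [mul_pow, Real.sq_sqrt hb.le] at h2; nlinarith
  have h0 : (1 : ℂ) + (b : ℂ) * ξ ^ 2 ≠ 0 := by
    intro h
    have hre := congrArg Complex.re h
    have him := congrArg Complex.im h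
    simp [ξ, pow_two, Complex.ext_iff] at hre him
    rcases him with h' | h'
    · exact hb.ne' h'
    · have hk0 : k = 0 := by nlinarith
      rw [hk0] at hre
      nlinarith
  rw [div_eq_iff h0] at heq
  have hre := congrArg Complex.re heq
  have him := congrArg Complex.im heq
  simp [ξ, pow_two, Complex.ext_iff] at hre him
  rcases eq_or_ne k 0 with hk | hk
  · subst hk
    simp at hre him
    have hp : 0 < 1 - b * (α * α) := by nlinarith
    have hq : 0 < 1 - a * (α * α) := by nlinarith
    nlinarith [mul_pos (mul_pos hα hα) hq, mul_nonneg (neg_nonneg.2 hr) hp.le]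
  · have hv : k * α + α * k ≠ 0 := by
      have hkα : k * α ≠ 0 := mul_ne_zero hk hα.ne'
      intro h; apply hkα; linarith
    have key : (-(1 + 2 * a * (k * k - α * α)) - r * b) * (k * α + α * k) = 0 := by
      linear_combination him
    rcases mul_eq_zero.mp key with he | he
    · have hr2 : a * ((k * k - α * α) ^ 2 + (k * α + α * k) ^ 2) = r := by
        linear_combination hre - (k * k - α * α) * he
      have hvsq : 0 < (k * α + α * k) ^ 2 := by positivity
      nlinarith [sq_nonneg (k * k - α * α), mul_pos ha hvsq]
    · exact hv he
end

section
/- Let 0 < a < b. For all u = (q, r) ∈ H¹(ℝ) × H¹(ℝ), the integral ∫_ℝ (E(u) + F₂(u)) dx is nonnegative, where E(u) = (1/2)(q² + r² + a(∂ₓq)² + b(∂ₓr)²) and F₂(u) = r·B⁻¹A q + a(∂ₓq)(∂ₓr), with A = I − a∂ₓ², B = I − b∂ₓ² (so B⁻¹A is the Fourier multiplier with symbol (1+aξ²)/(1+bξ²)). -/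
/-!
With `K` the kernel of `B⁻¹`, `B⁻¹A = (a/b) I + (1 - a/b) K⋆`, and the integrand equals
`(a/2b)(q+r)² + (a/2)(q'+r')² + ((b-a)/2) r'² + (1 - a/b)(q²/2 + r²/2 + r (K⋆q))`.
The first three terms are pointwise nonnegative. For the last one, `K ≥ 0` and `∫ K = 1`, so by
Fubini `‖r‖² + ‖q‖² + 2⟨r, K⋆q⟩ = ∫∫ K(x-y) (r x + q y)² dx dy ≥ 0`.
-/

open MeasureTheory

section KernelPairing

variable {G : Type*} [AddCommGroup G] [MeasurableSpace G] [MeasurableAdd₂ G] [MeasurableNeg G]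
  {μ : Measure G} [SFinite μ] [μ.IsAddLeftInvariant] {K f g : G → ℝ}

theorem integrable_prod_kernel_sub_mul_snd (hK : Integrable K μ) (hf : Integrable f μ) :
    Integrable (fun p : G × G => K (p.1 - p.2) * f p.2) (μ.prod μ) := by
  simpa only [ContinuousLinearMap.mul_apply', mul_comm (K _)] using
    hf.convolution_integrand (ContinuousLinearMap.mul ℝ ℝ) hK (μ := μ)

theorem integrable_prod_kernel_sub_mul_fst [μ.IsNegInvariant] (hK : Integrable K μ)
    (hg : Integrable g μ) :
    Integrable (fun p : G × G => K (p.1 - p.2) * g p.1) (μ.prod μ) := by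
  simpa only [Function.comp_def, Prod.fst_swap, Prod.snd_swap, neg_sub] using
    (integrable_prod_kernel_sub_mul_snd (K := fun t => K (-t)) hK.comp_neg hg).swap

theorem integrable_prod_kernel_sub_mul_mul [μ.IsNegInvariant] (hK : Integrable K μ)
    (hf : MemLp f 2 μ) (hg : MemLp g 2 μ) :
    Integrable (fun p : G × G => K (p.1 - p.2) * (g p.1 * f p.2)) (μ.prod μ) := by
  have hK' : Integrable (fun t => |K t|) μ := hK.abs
  refine (((integrable_prod_kernel_sub_mul_fst hK' hg.integrable_sq).add
    (integrable_prod_kernel_sub_mul_snd hK' hf.integrable_sq)).div_const 2).mono' ?_ ?_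
  · exact (hK.1.comp_quasiMeasurePreserving (quasiMeasurePreserving_sub μ μ)).mul
      (hg.1.comp_fst.mul hf.1.comp_snd)
  · refine Filter.Eventually.of_forall fun p => ?_
    have hgf := two_mul_le_add_sq |g p.1| |f p.2|
    rw [sq_abs, sq_abs] at hgf
    rw [Pi.add_apply, Real.norm_eq_abs, abs_mul, abs_mul]
    nlinarith [abs_nonneg (K (p.1 - p.2))]

theorem integrable_mul_integral_kernel_sub_mul [μ.IsNegInvariant] (hK : Integrable K μ)
    (hf : MemLp f 2 μ) (hg : MemLp g 2 μ) :
    Integrable (fun x => g x * ∫ y, K (x - y) * f y ∂μ) μ := by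
  refine (integrable_prod_kernel_sub_mul_mul hK hf hg).integral_prod_left.congr
    (Filter.Eventually.of_forall fun x => ?_)
  simp only [← integral_const_mul, mul_left_comm (K _)]

theorem integral_prod_kernel_sub_mul_add_sq [μ.IsNegInvariant] (hK : Integrable K μ)
    (hf : MemLp f 2 μ) (hg : MemLp g 2 μ) :
    ∫ p, K (p.1 - p.2) * (g p.1 + f p.2) ^ 2 ∂(μ.prod μ) =
      (∫ t, K t ∂μ) * (∫ x, g x ^ 2 ∂μ + ∫ x, f x ^ 2 ∂μ)
        + 2 * ∫ x, g x * ∫ y, K (x - y) * f y ∂μ ∂μ := by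
  have hg2 := integrable_prod_kernel_sub_mul_fst hK hg.integrable_sq
  have hgf := integrable_prod_kernel_sub_mul_mul hK hf hg
  have hf2 := integrable_prod_kernel_sub_mul_snd hK hf.integrable_sq
  have eg2 : ∫ p, K (p.1 - p.2) * g p.1 ^ 2 ∂(μ.prod μ) =
      (∫ t, K t ∂μ) * ∫ x, g x ^ 2 ∂μ := by
    simp only [integral_prod _ hg2, integral_mul_const, integral_sub_left_eq_self,
      integral_const_mul]
  have ef2 : ∫ p, K (p.1 - p.2) * f p.2 ^ 2 ∂(μ.prod μ) =
      (∫ t, K t ∂μ) * ∫ x, f x ^ 2 ∂μ := by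
    simp only [integral_prod_symm _ hf2, integral_mul_const, integral_sub_right_eq_self,
      integral_const_mul]
  have egf : ∫ p, K (p.1 - p.2) * (g p.1 * f p.2) ∂(μ.prod μ) =
      ∫ x, g x * ∫ y, K (x - y) * f y ∂μ ∂μ := by
    rw [integral_prod _ hgf]
    simp only [← integral_const_mul, mul_left_comm (K _)]
  calc ∫ p, K (p.1 - p.2) * (g p.1 + f p.2) ^ 2 ∂(μ.prod μ)
      = ∫ p, (K (p.1 - p.2) * g p.1 ^ 2 + 2 * (K (p.1 - p.2) * (g p.1 * f p.2))
          + K (p.1 - p.2) * f p.2 ^ 2) ∂(μ.prod μ) := by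
        congr 1; ext p; ring
    _ = _ := by
      rw [integral_add (by exact hg2.add (hgf.const_mul 2)) hf2, integral_add hg2 (hgf.const_mul 2),
        integral_const_mul, eg2, egf, ef2]
      ring

theorem integral_mul_integral_kernel_sub_mul_nonneg [μ.IsNegInvariant] (hK0 : ∀ t, 0 ≤ K t)
    (hK : Integrable K μ) (hf : MemLp f 2 μ) (hg : MemLp g 2 μ) :
    0 ≤ (∫ t, K t ∂μ) * (∫ x, g x ^ 2 ∂μ + ∫ x, f x ^ 2 ∂μ)
      + 2 * ∫ x, g x * ∫ y, K (x - y) * f y ∂μ ∂μ := by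
  rw [← integral_prod_kernel_sub_mul_add_sq hK hf hg]
  exact integral_nonneg fun p => mul_nonneg (hK0 _) (sq_nonneg _)

end KernelPairing

section LaplaceKernel

open Real

/-- Green's function of `1 - s² ∂ₓ²`: `B⁻¹` is convolution with `laplaceKernel √b`. -/
noncomputable def laplaceKernel (s t : ℝ) : ℝ := 1 / (2 * s) * exp (-|t| / s)

variable {s : ℝ}

theorem laplaceKernel_nonneg (hs : 0 ≤ s) (t : ℝ) : 0 ≤ laplaceKernel s t := by
  unfold laplaceKernel; positivity

theorem integral_laplaceKernel (hs : 0 < s) : ∫ t, laplaceKernel s t = 1 := by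
  have h : ∫ u in Set.Ioi 0, exp (-u / s) = s := calc
    _ = ∫ u in Set.Ioi 0, exp (-s⁻¹ * u) := by simp_rw [neg_div, div_eq_inv_mul, neg_mul]
    _ = s := by
      rw [integral_exp_mul_Ioi (neg_lt_zero.mpr (inv_pos.mpr hs)) 0, mul_zero, exp_zero]
      field_simp
  unfold laplaceKernel
  rw [integral_comp_abs (f := fun u => 1 / (2 * s) * exp (-u / s)), integral_const_mul, h]
  field_simp

theorem integrable_laplaceKernel (hs : 0 < s) : Integrable (laplaceKernel s) :=
  .of_integral_ne_zero (by simp [integral_laplaceKernel hs])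

end LaplaceKernel

theorem energy_add_flux_eq {a b : ℝ} (hb : b ≠ 0) (q r q' r' P : ℝ) :
    1 / 2 * (q ^ 2 + r ^ 2 + a * q' ^ 2 + b * r' ^ 2) + (r * (a / b * q + (1 - a / b) * P)
      + a * q' * r') =
    a / (2 * b) * (q + r) ^ 2 + a / 2 * (q' + r') ^ 2 + (b - a) / 2 * r' ^ 2
      + (1 - a / b) * (1 / 2 * q ^ 2 + 1 / 2 * r ^ 2 + r * P) := by
  field_simp
  ring

theorem energy_plus_flux_nonneg_general (a b : ℝ) (ha : 0 < a) (hab : a < b)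
    (q r q' r' : ℝ → ℝ)
    (hq2 : MemLp q 2 (volume : Measure ℝ)) (hr2 : MemLp r 2 (volume : Measure ℝ))
    (hq'2 : MemLp q' 2 (volume : Measure ℝ)) (hr'2 : MemLp r' 2 (volume : Measure ℝ)) :
    0 ≤ ∫ x : ℝ,
      ((1 / 2) * ((q x) ^ 2 + (r x) ^ 2 + a * (q' x) ^ 2 + b * (r' x) ^ 2)
        + (r x * ((a / b) * q x
            + (1 - a / b) * ∫ y : ℝ,
                (1 / (2 * Real.sqrt b)) * Real.exp (-|x - y| / Real.sqrt b) * q y)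
          + a * q' x * r' x)) := by
  have hb : 0 < b := ha.trans hab
  have hs : 0 < √b := Real.sqrt_pos.mpr hb
  simp only [← laplaceKernel.eq_1, energy_add_flux_eq hb.ne']
  have hK := integrable_laplaceKernel hs
  have hpair := integral_mul_integral_kernel_sub_mul_nonneg (laplaceKernel_nonneg hs.le) hK hq2 hr2
  rw [integral_laplaceKernel hs, one_mul] at hpair
  have hrP := integrable_mul_integral_kernel_sub_mul hK hq2 hr2
  have hq2' := hq2.integrable_sq.const_mul (1 / 2)
  have hr2' := hr2.integrable_sq.const_mul (1 / 2)
  have hquad : Integrable (fun x => a / (2 * b) * (q x + r x) ^ 2 + a / 2 * (q' x + r' x) ^ 2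
      + (b - a) / 2 * r' x ^ 2) :=
    (((hq2.add hr2).integrable_sq.const_mul _).add
      ((hq'2.add hr'2).integrable_sq.const_mul _)).add (hr'2.integrable_sq.const_mul _)
  rw [integral_add hquad (by exact ((hq2'.add hr2').add hrP).const_mul _), integral_const_mul,
    integral_add (by exact hq2'.add hr2') hrP, integral_add hq2' hr2', integral_const_mul,
    integral_const_mul]
  refine add_nonneg (integral_nonneg fun x => ?_) (mul_nonneg ?_ (by linarith))
  · have : 0 ≤ b - a := by linarith
    positivity
  · exact sub_nonneg.mpr ((div_le_one hb).mpr hab.le)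

/-- For `0 < a < b` and `u = (q,r) ∈ H¹(ℝ)×H¹(ℝ)`,
`∫ (E(u) + F₂(u)) dx ≥ 0`, where `E(u) = ½(q² + r² + a q'² + b r'²)` and
`F₂(u) = r·(B⁻¹A q) + a q' r'`, with `B⁻¹A = (a/b)·I + (1-a/b)·B⁻¹` the Fourier
multiplier of symbol `(1+aξ²)/(1+bξ²)`, `B⁻¹` being convolution with the kernel
`(1/(2√b)) e^{-|x|/√b}`. -/
theorem energy_plus_flux_nonneg (a b : ℝ) (ha : 0 < a) (hab : a < b)
    (q r q' r' : ℝ → ℝ)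
    (hq : ∀ x, HasDerivAt q (q' x) x) (hr : ∀ x, HasDerivAt r (r' x) x)
    (hq2 : MemLp q 2 (volume : Measure ℝ)) (hr2 : MemLp r 2 (volume : Measure ℝ))
    (hq'2 : MemLp q' 2 (volume : Measure ℝ)) (hr'2 : MemLp r' 2 (volume : Measure ℝ)) :
    0 ≤ ∫ x : ℝ,
      ((1 / 2) * ((q x) ^ 2 + (r x) ^ 2 + a * (q' x) ^ 2 + b * (r' x) ^ 2)
        + (r x * ((a / b) * q x
            + (1 - a / b) * ∫ y : ℝ,
                (1 / (2 * Real.sqrt b)) * Real.exp (-|x - y| / Real.sqrt b) * q y)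
          + a * q' x * r' x)) :=
  energy_plus_flux_nonneg_general a b ha hab q r q' r' hq2 hr2 hq'2 hr'2
end
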